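/- In the network B_clockwise(κ,m), define SPAN(u) = { v : 0 ≤ δ_clockwise(u,v) < m·κ^{ℓ(u)+1} }. If u ≠ t, t ∈ SPAN(u), δ_clockwise(u,t) ≥ m, and ℓ(u) ≥ 1, then every greedy next hop v of u (any neighbor of u minimizing δ_clockwise(·,t)) satisfies ℓ(v) = ℓ(u) − 1 and t ∈ SPAN(v). -/

import Mathlib

/-- The clockwise distance `(v - u) mod n` between two nodes on a ring of `n` nodes. -/
def clockDelta (n : ℕ) (u v : Fin n) : ℕ := ((v : ℕ) + n - (u : ℕ)) % n

/-- The level `ℓ(u) = (m-1) - (u mod m)` of a node. -/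
def clockLevel (m : ℕ) {n : ℕ} (u : Fin n) : ℕ := (m - 1) - ((u : ℕ) % m)

/-- The directed edges of the Papillon network `B_clockwise(κ, m)` on `n = κ^m * m` nodes:
`u` links to `(u + x) mod n` for `x ∈ {1 + i·m·κ^{ℓ(u)} : 0 ≤ i < κ}`. -/
def clockEdge (κ m : ℕ) (u v : Fin (κ ^ m * m)) : Prop :=
  ∃ i < κ, (v : ℕ) = ((u : ℕ) + (1 + i * m * κ ^ clockLevel m u)) % (κ ^ m * m)

/-- `v` is a greedy next hop from `u` towards target `t` with respect to `δ_clockwise`: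
`v` is a neighbor of `u` minimizing the clockwise distance to `t` among `u`'s neighbors. -/
def clockGreedyStep (κ m : ℕ) (t u v : Fin (κ ^ m * m)) : Prop :=
  clockEdge κ m u v ∧ ∀ v', clockEdge κ m u v' →
    clockDelta (κ ^ m * m) v t ≤ clockDelta (κ ^ m * m) v' t

/-- `v ∈ SPAN(u)`, i.e. `0 ≤ δ_clockwise(u, v) < m · κ^{ℓ(u)+1}`. -/
def clockInSpan (κ m : ℕ) (u v : Fin (κ ^ m * m)) : Prop :=
  clockDelta (κ ^ m * m) u v < m * κ ^ (clockLevel m u + 1)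

/-!
A link of `u` has offset `1 + i·M` with `M = m·κ^{ℓ(u)}` a multiple of `m`, and `m ∣ n`; so it
raises `u mod m` by one, which stays below `m` because `ℓ(u) ≥ 1`, and the level drops by one.
For the span, write `δ(u,t) - 1 = i·M + r` with `r < M`: since `δ(u,t) < κ·M` we have `i < κ`,
and the link with offset `1 + i·M` reaches a node at distance `r` from `t`. A greedy hop does at
least as well, so its distance to `t` is below `M = m·κ^{ℓ(v)+1}`.
-/

section ClockDelta

variable {n : ℕ}

lemma clockDelta_lt (u v : Fin n) : clockDelta n u v < n :=
  Nat.mod_lt _ u.pos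

lemma add_clockDelta_mod (u t : Fin n) : ((u : ℕ) + clockDelta n u t) % n = t := by
  rw [clockDelta, Nat.add_mod_mod, Nat.add_sub_cancel' (by omega), Nat.add_mod_right,
    Nat.mod_eq_of_lt t.isLt]

lemma clockDelta_eq_of_add_mod_eq {u t : Fin n} {d : ℕ} (hd : d < n)
    (h : ((u : ℕ) + d) % n = t) : clockDelta n u t = d := by
  have hmod : (t : ℕ) + n - u ≡ d [MOD n] := by
    refine Nat.ModEq.add_right_cancel' (u : ℕ) ?_
    rw [Nat.sub_add_cancel (by omega), Nat.ModEq, Nat.add_mod_right, ← h, add_comm d]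
    exact Nat.mod_mod _ _
  rw [clockDelta, hmod, Nat.mod_eq_of_lt hd]

lemma clockDelta_of_add_mod_eq {u t v : Fin n} {x : ℕ} (hv : (v : ℕ) = ((u : ℕ) + x) % n)
    (hx : x ≤ clockDelta n u t) : clockDelta n v t = clockDelta n u t - x := by
  refine clockDelta_eq_of_add_mod_eq ((Nat.sub_le _ _).trans_lt (clockDelta_lt u t)) ?_
  rw [hv, Nat.mod_add_mod, add_assoc, Nat.add_sub_cancel' hx, add_clockDelta_mod]

end ClockDelta

lemma add_one_add_mul_mod_mod {a k m n : ℕ} (hmn : m ∣ n) (ha : a % m + 1 < m) :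
    (a + (1 + k * m)) % n % m = a % m + 1 := by
  rw [Nat.mod_mod_of_dvd _ hmn, ← add_assoc, Nat.add_mul_mod_self_right, Nat.add_mod,
    Nat.one_mod_eq_one.mpr (by omega), Nat.mod_eq_of_lt ha]

section Papillon

variable {κ m : ℕ} {u v t : Fin (κ ^ m * m)}

lemma clockLevel_of_clockEdge (hlev : 1 ≤ clockLevel m u) (h : clockEdge κ m u v) :
    clockLevel m v = clockLevel m u - 1 := by
  obtain ⟨i, -, hv⟩ := h
  have hmod : (v : ℕ) % m = (u : ℕ) % m + 1 := by
    rw [hv, mul_right_comm]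
    exact add_one_add_mul_mod_mod (Dvd.intro_left _ rfl) (by unfold clockLevel at hlev; omega)
  unfold clockLevel at hlev ⊢
  omega

lemma exists_clockEdge_clockDelta_lt (hpos : 1 ≤ clockDelta (κ ^ m * m) u t)
    (hspan : clockInSpan κ m u t) :
    ∃ v', clockEdge κ m u v' ∧ clockDelta (κ ^ m * m) v' t < m * κ ^ clockLevel m u := by
  set M := m * κ ^ clockLevel m u
  set d := clockDelta (κ ^ m * m) u t
  have hd : d < κ * M := by
    calc d < m * κ ^ (clockLevel m u + 1) := hspan
      _ = κ * M := by rw [pow_succ]; ring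
  have hM : 0 < M := Nat.pos_of_mul_pos_left (show 0 < κ * M by omega)
  have hdiv := Nat.div_add_mod (d - 1) M
  have hrem := Nat.mod_lt (d - 1) hM
  let v' : Fin (κ ^ m * m) := ⟨((u : ℕ) + (1 + (d - 1) / M * M)) % (κ ^ m * m), Nat.mod_lt _ u.pos⟩
  have hdist : clockDelta (κ ^ m * m) v' t = d - (1 + (d - 1) / M * M) :=
    clockDelta_of_add_mod_eq rfl (by rw [mul_comm]; omega)
  refine ⟨v', ⟨(d - 1) / M, (Nat.div_lt_iff_lt_mul hM).mpr (by omega), ?_⟩, ?_⟩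
  · simp only [v', M, mul_assoc]
  · rw [hdist, mul_comm]
    omega

end Papillon

theorem clockwise_greedy_phase_two_general (κ m : ℕ)
    (u t v : Fin (κ ^ m * m))
    (hspan : clockInSpan κ m u t)
    (hfar : m ≤ clockDelta (κ ^ m * m) u t)
    (hlev : 1 ≤ clockLevel m u)
    (hgreedy : clockGreedyStep κ m t u v) :
    clockLevel m v = clockLevel m u - 1 ∧ clockInSpan κ m v t := by
  obtain ⟨hedge, hmin⟩ := hgreedy
  have hlevv := clockLevel_of_clockEdge hlev hedge
  have hpos : 1 ≤ clockDelta (κ ^ m * m) u t := by unfold clockLevel at hlev; omega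
  obtain ⟨v', hv', hclose⟩ := exists_clockEdge_clockDelta_lt hpos hspan
  refine ⟨hlevv, ?_⟩
  rw [clockInSpan, hlevv, Nat.sub_add_cancel hlev]
  exact (hmin v' hv').trans_lt hclose

/-- In `B_clockwise(κ, m)`: if `u ≠ t`, `t ∈ SPAN(u)`, `δ_clockwise(u, t) ≥ m` and
`ℓ(u) ≥ 1`, then every greedy next hop `v` of `u` towards `t` satisfies
`ℓ(v) = ℓ(u) - 1` and `t ∈ SPAN(v)`. -/
theorem clockwise_greedy_phase_two (κ m : ℕ) (hκ : 1 ≤ κ) (hm : 1 ≤ m)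
    (u t v : Fin (κ ^ m * m)) (hne : u ≠ t)
    (hspan : clockInSpan κ m u t)
    (hfar : m ≤ clockDelta (κ ^ m * m) u t)
    (hlev : 1 ≤ clockLevel m u)
    (hgreedy : clockGreedyStep κ m t u v) :
    clockLevel m v = clockLevel m u - 1 ∧ clockInSpan κ m v t :=
  clockwise_greedy_phase_two_general κ m u t v hspan hfar hlev hgreedy
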